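/- arXiv:2404.18272 — 5 statements merged into one kernel-verified Lean document; each statement's English description precedes it below -/
import Mathlib

section
/- Let γ ∈ (d, d+2], let Ω ⊆ ℝ^d be open, let u ∈ C^{(γ−d)/2}(Ω) ∩ L_∞(Ω) and let v ∈ L²(Ω) ∩ L_∞(Ω). Then |||u v|||_{M,γ}² ≤ 2 ‖u‖_{L_∞(Ω)}² |||v|||_{M,γ}² + 2^{1+γ−d} ω_d ‖v‖_{L_∞(Ω)}² |||u|||_{C^{(γ−d)/2}(Ω)}² + 2^{γ} ω_d ‖u‖_{L_∞(Ω)}² ‖v‖_{L_∞(Ω)}². -/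
open MeasureTheory Metric ENNReal

/-- The Campanato seminorm `|||u|||_{M,γ}` (with `Re = 1`) of a function `u`
on an open set `Ω ⊆ ℝ^d`. -/
noncomputable def campanatoSeminorm (d : ℕ) (Ω : Set (EuclideanSpace ℝ (Fin d)))
    (γ : ℝ) (u : EuclideanSpace ℝ (Fin d) → ℂ) : ℝ≥0∞ :=
  ⨆ x ∈ closure Ω, ⨆ r ∈ Set.Ioc (0 : ℝ) 1,
    (ENNReal.ofReal (r ^ (-γ)) *
      ∫⁻ y in Ω ∩ ball x r,
        (‖u y - ⨍ z in Ω ∩ ball x r, u z‖₊ : ℝ≥0∞) ^ 2) ^ (1/2 : ℝ)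

/-- The Hölder seminorm `|||u|||_{C^ν(S)} = sup { |u(x)−u(y)|/|x−y|^ν :
x, y ∈ S, 0 < |x−y| ≤ 1 }`. -/
noncomputable def holderSeminorm (d : ℕ) (ν : ℝ) (S : Set (EuclideanSpace ℝ (Fin d)))
    (u : EuclideanSpace ℝ (Fin d) → ℂ) : ℝ≥0∞ :=
  ⨆ x ∈ S, ⨆ y ∈ S, ⨆ (_ : x ≠ y ∧ dist x y ≤ 1),
    ENNReal.ofReal (‖u x - u y‖ / dist x y ^ ν)

/-- The sup norm of `u` on `Ω`, as the `L_∞(Ω)` norm. -/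
noncomputable def linftyNorm (d : ℕ) (Ω : Set (EuclideanSpace ℝ (Fin d)))
    (u : EuclideanSpace ℝ (Fin d) → ℂ) : ℝ≥0∞ :=
  eLpNorm u ⊤ (volume.restrict Ω)

/-! On a ball `Ω(x,r)` split `uv - ⟨uv⟩ = u (v - ⟨v⟩) + (u ⟨v⟩ - ⟨uv⟩)`. The second term is the
average over `z` of `(u(y) - u(z)) v(z)`, hence at most `|||u|||_{C^ν} (2r)^ν ‖v‖_∞` with
`ν = (γ - d)/2` as long as `2r ≤ 1`, and `r^{-γ} (2r)^{2ν} |Ω(x,r)| ≤ 2^{γ-d} ω_d`. For `r > 1/2`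
the Hölder bound is unavailable, but the average minimises the `L²` distance to constants, so the
local Campanato quantity is at most `r^{-γ} |Ω(x,r)| ‖u‖_∞² ‖v‖_∞² ≤ 2^γ ω_d ‖u‖_∞² ‖v‖_∞²`. -/

theorem ENNReal.add_sq_le (a b : ℝ≥0∞) : (a + b) ^ 2 ≤ 2 * (a ^ 2 + b ^ 2) := by
  have h := ENNReal.rpow_add_le_mul_rpow_add_rpow a b one_le_two
  norm_num [ENNReal.rpow_two] at h
  exact h

section
variable {α E : Type*} [MeasurableSpace α] {μ : Measure α}
  [NormedAddCommGroup E] [InnerProductSpace ℝ E] [CompleteSpace E]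

theorem integral_norm_sub_average_sq [IsFiniteMeasure μ] {f : α → E} (hf : MemLp f 2 μ) :
    ∫ x, ‖f x - ⨍ y, f y ∂μ‖ ^ 2 ∂μ =
      ∫ x, ‖f x‖ ^ 2 ∂μ - μ.real Set.univ * ‖⨍ y, f y ∂μ‖ ^ 2 := by
  set m := ⨍ y, f y ∂μ
  have hf1 : Integrable f μ := hf.integrable one_le_two
  have hsq : Integrable (fun x => ‖f x‖ ^ 2) μ := hf.integrable_norm_pow two_ne_zero
  have hinner : Integrable (fun x => 2 * inner ℝ (f x) m) μ := (hf1.inner_const m).const_mul 2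
  have hdiff : Integrable (fun x => ‖f x‖ ^ 2 - 2 * inner ℝ (f x) m) μ := hsq.sub hinner
  have hmean : ∫ x, inner ℝ (f x) m ∂μ = μ.real Set.univ * ‖m‖ ^ 2 := by
    simp_rw [real_inner_comm m]
    rw [integral_inner hf1, ← measure_smul_average, real_inner_smul_right,
      real_inner_self_eq_norm_sq]
  simp_rw [norm_sub_sq_real]
  rw [integral_add hdiff (integrable_const _), integral_sub hsq hinner,
    integral_const_mul, hmean, integral_const, smul_eq_mul]
  ring

theorem lintegral_enorm_sq_eq_ofReal {F : Type*} [NormedAddCommGroup F] {f : α → F}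
    (hf : MemLp f 2 μ) :
    ∫⁻ x, ‖f x‖ₑ ^ 2 ∂μ = ENNReal.ofReal (∫ x, ‖f x‖ ^ 2 ∂μ) := by
  rw [ofReal_integral_eq_lintegral_ofReal (hf.integrable_norm_pow two_ne_zero)
    (.of_forall fun x => by positivity)]
  simp_rw [ENNReal.ofReal_pow (norm_nonneg _), ofReal_norm]

theorem lintegral_enorm_sub_average_sq_le [IsFiniteMeasure μ] {f : α → E} (hf : MemLp f 2 μ) :
    ∫⁻ x, ‖f x - ⨍ y, f y ∂μ‖ₑ ^ 2 ∂μ ≤ ∫⁻ x, ‖f x‖ₑ ^ 2 ∂μ := by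
  rw [lintegral_enorm_sq_eq_ofReal (f := fun x => f x - ⨍ y, f y ∂μ) (hf.sub (memLp_const _)),
    lintegral_enorm_sq_eq_ofReal hf, integral_norm_sub_average_sq hf]
  gcongr
  exact sub_le_self _ (by positivity)

theorem enorm_average_le_of_ae_le {F : Type*} [NormedAddCommGroup F] [NormedSpace ℝ F]
    {f : α → F} {C : ℝ≥0∞} (hf : ∀ᵐ x ∂μ, ‖f x‖ₑ ≤ C) :
    ‖⨍ x, f x ∂μ‖ₑ ≤ C :=
  calc ‖⨍ x, f x ∂μ‖ₑ ≤ ⨍⁻ x, ‖f x‖ₑ ∂μ := enorm_integral_le_lintegral_enorm _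
    _ ≤ essSup (fun x => ‖f x‖ₑ) μ := laverage_le_essSup _
    _ ≤ C := essSup_le_of_ae_le C hf
end

section
variable {α 𝕜 : Type*} [MeasurableSpace α] {μ : Measure α} [RCLike 𝕜] {u v : α → 𝕜}

theorem enorm_mul_average_sub_average_mul_le {a : 𝕜} {ε M : ℝ≥0∞}
    (hv : Integrable v μ) (huv : Integrable (fun z => u z * v z) μ)
    (hu : ∀ᵐ z ∂μ, ‖a - u z‖ₑ ≤ ε) (hvM : ∀ᵐ z ∂μ, ‖v z‖ₑ ≤ M) :
    ‖a * ⨍ z, v z ∂μ - ⨍ z, u z * v z ∂μ‖ₑ ≤ ε * M := by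
  have hlin : a * ⨍ z, v z ∂μ - ⨍ z, u z * v z ∂μ = ⨍ z, (a - u z) * v z ∂μ := by
    simp_rw [average_eq, sub_mul, integral_sub (hv.const_mul a) huv, integral_const_mul, smul_sub,
      mul_smul_comm]
  rw [hlin]
  refine enorm_average_le_of_ae_le ?_
  filter_upwards [hu, hvM] with z hz hvz
  rw [enorm_mul]
  exact mul_le_mul' hz hvz

theorem lintegral_enorm_mul_sub_average_sq_le {Mu Mv ε : ℝ≥0∞}
    (hv : Integrable v μ) (huv : Integrable (fun y => u y * v y) μ) (hMu : Mu ≠ ∞)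
    (huM : ∀ᵐ y ∂μ, ‖u y‖ₑ ≤ Mu) (hvM : ∀ᵐ y ∂μ, ‖v y‖ₑ ≤ Mv)
    (hosc : ∀ᵐ y ∂μ, ∀ᵐ z ∂μ, ‖u y - u z‖ₑ ≤ ε) :
    ∫⁻ y, ‖u y * v y - ⨍ z, u z * v z ∂μ‖ₑ ^ 2 ∂μ ≤
      2 * Mu ^ 2 * ∫⁻ y, ‖v y - ⨍ z, v z ∂μ‖ₑ ^ 2 ∂μ + 2 * (ε * Mv) ^ 2 * μ Set.univ := by
  have hpt : ∀ᵐ y ∂μ, ‖u y * v y - ⨍ z, u z * v z ∂μ‖ₑ ^ 2 ≤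
      2 * Mu ^ 2 * ‖v y - ⨍ z, v z ∂μ‖ₑ ^ 2 + 2 * (ε * Mv) ^ 2 := by
    filter_upwards [huM, hosc] with y hy hyz
    have hsplit : u y * v y - ⨍ z, u z * v z ∂μ =
        u y * (v y - ⨍ z, v z ∂μ) + (u y * ⨍ z, v z ∂μ - ⨍ z, u z * v z ∂μ) := by ring
    calc ‖u y * v y - ⨍ z, u z * v z ∂μ‖ₑ ^ 2
        ≤ (Mu * ‖v y - ⨍ z, v z ∂μ‖ₑ + ε * Mv) ^ 2 := by
          rw [hsplit]
          gcongr
          refine (enorm_add_le _ _).trans (add_le_add ?_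
            (enorm_mul_average_sub_average_mul_le hv huv hyz hvM))
          rw [enorm_mul]
          gcongr
      _ ≤ 2 * ((Mu * ‖v y - ⨍ z, v z ∂μ‖ₑ) ^ 2 + (ε * Mv) ^ 2) := ENNReal.add_sq_le _ _
      _ = _ := by ring
  calc _ ≤ ∫⁻ y, 2 * Mu ^ 2 * ‖v y - ⨍ z, v z ∂μ‖ₑ ^ 2 + 2 * (ε * Mv) ^ 2 ∂μ :=
        lintegral_mono_ae hpt
    _ = _ := by
        rw [lintegral_add_right _ measurable_const, lintegral_const_mul' _ _ (by finiteness),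
          lintegral_const]

theorem lintegral_enorm_mul_sub_average_sq_le_of_bdd [IsFiniteMeasure μ] {Mu Mv : ℝ≥0∞}
    (huv : MemLp (fun y => u y * v y) 2 μ)
    (huM : ∀ᵐ y ∂μ, ‖u y‖ₑ ≤ Mu) (hvM : ∀ᵐ y ∂μ, ‖v y‖ₑ ≤ Mv) :
    ∫⁻ y, ‖u y * v y - ⨍ z, u z * v z ∂μ‖ₑ ^ 2 ∂μ ≤ (Mu * Mv) ^ 2 * μ Set.univ := by
  refine (lintegral_enorm_sub_average_sq_le huv).trans ?_
  rw [← lintegral_const]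
  refine lintegral_mono_ae ?_
  filter_upwards [huM, hvM] with y hu hv
  rw [enorm_mul]
  gcongr
end

section
variable {d : ℕ} {Ω : Set (EuclideanSpace ℝ (Fin d))} {u v : EuclideanSpace ℝ (Fin d) → ℂ}
  {x y z : EuclideanSpace ℝ (Fin d)} {r γ ν : ℝ}

theorem campanatoSeminorm_sq_le_iff {w : EuclideanSpace ℝ (Fin d) → ℂ} {C : ℝ≥0∞} :
    campanatoSeminorm d Ω γ w ^ 2 ≤ C ↔ ∀ x ∈ closure Ω, ∀ r ∈ Set.Ioc (0 : ℝ) 1,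
      ENNReal.ofReal (r ^ (-γ)) *
        ∫⁻ y in Ω ∩ ball x r, ‖w y - ⨍ z in Ω ∩ ball x r, w z‖ₑ ^ 2 ≤ C := by
  rw [← ENNReal.rpow_natCast, ← ENNReal.le_rpow_inv_iff (by norm_num), campanatoSeminorm]
  simp only [iSup₂_le_iff]
  refine forall₂_congr fun x _ => forall₂_congr fun r _ => ?_
  rw [Nat.cast_ofNat, ← one_div, ENNReal.rpow_le_rpow_iff (by norm_num)]
  rfl

theorem enorm_sub_le_holderSeminorm_mul (hy : y ∈ Ω) (hz : z ∈ Ω) (hyz : dist y z ≤ 1) :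
    ‖u y - u z‖ₑ ≤ holderSeminorm d ν Ω u * ENNReal.ofReal (dist y z ^ ν) := by
  rcases eq_or_ne y z with rfl | hne
  · simp
  have hpos : 0 < dist y z ^ ν := Real.rpow_pos_of_pos (dist_pos.2 hne) ν
  have hle : ENNReal.ofReal (‖u y - u z‖ / dist y z ^ ν) ≤ holderSeminorm d ν Ω u :=
    le_iSup₂_of_le y hy <| le_iSup₂_of_le z hz <| le_iSup_of_le ⟨hne, hyz⟩ le_rfl
  calc ‖u y - u z‖ₑ
      = ENNReal.ofReal (‖u y - u z‖ / dist y z ^ ν) * ENNReal.ofReal (dist y z ^ ν) := by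
        rw [← ENNReal.ofReal_mul (by positivity), div_mul_cancel₀ _ hpos.ne', ofReal_norm]
    _ ≤ _ := by gcongr

theorem enorm_sub_le_holderSeminorm_mul_of_mem_ball (hν : 0 ≤ ν) (hr : r ≤ 1 / 2)
    (hy : y ∈ Ω ∩ ball x r) (hz : z ∈ Ω ∩ ball x r) :
    ‖u y - u z‖ₑ ≤ holderSeminorm d ν Ω u * ENNReal.ofReal ((2 * r) ^ ν) := by
  have hdist : dist y z ≤ 2 * r := by
    linarith [dist_triangle_right y z x, mem_ball.1 hy.2, mem_ball.1 hz.2]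
  refine (enorm_sub_le_holderSeminorm_mul (ν := ν) hy.1 hz.1 (by linarith)).trans ?_
  gcongr

theorem volume_inter_ball_le (Ω : Set (EuclideanSpace ℝ (Fin d))) (x : EuclideanSpace ℝ (Fin d))
    (hr : 0 < r) :
    volume (Ω ∩ ball x r) ≤
      ENNReal.ofReal (r ^ d) * volume (ball (0 : EuclideanSpace ℝ (Fin d)) 1) :=
  (measure_mono Set.inter_subset_right).trans_eq <| by
    rw [Measure.addHaar_ball_of_pos _ _ hr, finrank_euclideanSpace_fin]

theorem ae_restrict_enorm_le_linftyNorm {A : Set (EuclideanSpace ℝ (Fin d))} (hA : A ⊆ Ω) :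
    ∀ᵐ y ∂volume.restrict A, ‖u y‖ₑ ≤ linftyNorm d Ω u :=
  ae_restrict_of_ae_restrict_of_subset hA <| by
    simpa only [linftyNorm, eLpNorm_exponent_top] using enorm_ae_le_eLpNormEssSup u _

instance isFiniteMeasure_restrict_inter_ball :
    IsFiniteMeasure (volume.restrict (Ω ∩ ball x r)) :=
  isFiniteMeasure_restrict.2
    ((measure_mono Set.inter_subset_right).trans_lt measure_ball_lt_top).ne

theorem rpow_neg_mul_two_mul_rpow_sq_mul_pow {r : ℝ} (hr : 0 < r) (γ : ℝ) (d : ℕ) :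
    r ^ (-γ) * (2 * ((2 * r) ^ ((γ - d) / 2)) ^ 2 * r ^ d) = 2 ^ (1 + γ - d) := by
  have hsq : ((2 * r) ^ ((γ - d) / 2)) ^ 2 = 2 ^ (γ - d) * r ^ (γ - d) := by
    rw [← Real.rpow_mul_natCast (by positivity), Real.mul_rpow zero_le_two hr.le]
    norm_num
  have hr0 : r ^ (-γ) * r ^ (γ - d) * r ^ (d : ℝ) = 1 := by
    rw [← Real.rpow_add hr, ← Real.rpow_add hr, show -γ + (γ - d) + d = (0 : ℝ) by ring,
      Real.rpow_zero]
  rw [hsq, add_sub_assoc, Real.rpow_add two_pos, Real.rpow_one, ← Real.rpow_natCast r d]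
  linear_combination (2 * 2 ^ (γ - d)) * hr0

theorem rpow_neg_mul_pow_le_two_rpow {r γ : ℝ} {d : ℕ} (hr : 1 / 2 < r) (hdγ : d ≤ γ) :
    r ^ (-γ) * r ^ d ≤ 2 ^ γ := by
  have hr0 : 0 < r := by linarith
  calc r ^ (-γ) * r ^ d = r ^ ((d : ℝ) - γ) := by
        rw [← Real.rpow_natCast, ← Real.rpow_add hr0, neg_add_eq_sub]
    _ ≤ (1 / 2) ^ ((d : ℝ) - γ) := Real.rpow_le_rpow_of_nonpos (by norm_num) hr.le (by linarith)
    _ = 2 ^ (γ - d) := by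
        rw [one_div, Real.inv_rpow zero_le_two, ← Real.rpow_neg zero_le_two, neg_sub]
    _ ≤ 2 ^ γ :=
        Real.rpow_le_rpow_of_exponent_le one_le_two (by linarith [d.cast_nonneg (α := ℝ)])

theorem campanato_mul_ball_le_of_le_half (hΩ : IsOpen Ω) (hu : MemLp u ⊤ (volume.restrict Ω))
    (hv : MemLp v 2 (volume.restrict Ω)) (hdγ : d ≤ γ) (hr : 0 < r) (hr2 : r ≤ 1 / 2) :
    ENNReal.ofReal (r ^ (-γ)) *
        ∫⁻ y in Ω ∩ ball x r, ‖u y * v y - ⨍ z in Ω ∩ ball x r, u z * v z‖ₑ ^ 2 ≤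
      2 * linftyNorm d Ω u ^ 2 * (ENNReal.ofReal (r ^ (-γ)) *
        ∫⁻ y in Ω ∩ ball x r, ‖v y - ⨍ z in Ω ∩ ball x r, v z‖ₑ ^ 2) +
      ENNReal.ofReal (2 ^ (1 + γ - d)) * volume (ball (0 : EuclideanSpace ℝ (Fin d)) 1) *
        linftyNorm d Ω v ^ 2 * holderSeminorm d ((γ - d) / 2) Ω u ^ 2 := by
  set A := Ω ∩ ball x r
  have hAΩ : volume.restrict A ≤ volume.restrict Ω :=
    Measure.restrict_mono Set.inter_subset_left le_rfl
  have hA : MeasurableSet A := hΩ.measurableSet.inter measurableSet_ball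
  have hosc : ∀ᵐ y ∂volume.restrict A, ∀ᵐ z ∂volume.restrict A,
      ‖u y - u z‖ₑ ≤
        holderSeminorm d ((γ - d) / 2) Ω u * ENNReal.ofReal ((2 * r) ^ ((γ - d) / 2)) :=
    ae_restrict_of_forall_mem hA fun y hy => ae_restrict_of_forall_mem hA fun z hz =>
      enorm_sub_le_holderSeminorm_mul_of_mem_ball (by linarith) hr2 hy hz
  have hbound := lintegral_enorm_mul_sub_average_sq_le (Mu := linftyNorm d Ω u)
    ((hv.mono_measure hAΩ).integrable one_le_two)
    (((hv.mul' hu).mono_measure hAΩ).integrable one_le_two) hu.eLpNorm_ne_top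
    (ae_restrict_enorm_le_linftyNorm Set.inter_subset_left)
    (ae_restrict_enorm_le_linftyNorm Set.inter_subset_left) hosc
  rw [Measure.restrict_apply_univ] at hbound
  calc _ ≤ ENNReal.ofReal (r ^ (-γ)) * (2 * linftyNorm d Ω u ^ 2 *
          (∫⁻ y in A, ‖v y - ⨍ z in A, v z‖ₑ ^ 2) + 2 * (holderSeminorm d ((γ - d) / 2) Ω u *
            ENNReal.ofReal ((2 * r) ^ ((γ - d) / 2)) * linftyNorm d Ω v) ^ 2 *
            (ENNReal.ofReal (r ^ d) * volume (ball (0 : EuclideanSpace ℝ (Fin d)) 1))) := by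
        grw [hbound, volume_inter_ball_le Ω x hr]
    _ = 2 * linftyNorm d Ω u ^ 2 * (ENNReal.ofReal (r ^ (-γ)) *
          ∫⁻ y in A, ‖v y - ⨍ z in A, v z‖ₑ ^ 2) + ENNReal.ofReal (r ^ (-γ)) *
          (2 * (holderSeminorm d ((γ - d) / 2) Ω u * ENNReal.ofReal ((2 * r) ^ ((γ - d) / 2)) *
            linftyNorm d Ω v) ^ 2 *
            (ENNReal.ofReal (r ^ d) * volume (ball (0 : EuclideanSpace ℝ (Fin d)) 1))) := by
        rw [mul_add, mul_left_comm]
    _ = _ := by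
        congr 1
        rw [← rpow_neg_mul_two_mul_rpow_sq_mul_pow hr, ENNReal.ofReal_mul (by positivity),
          ENNReal.ofReal_mul (by positivity), ENNReal.ofReal_mul zero_le_two,
          ENNReal.ofReal_pow (by positivity : 0 ≤ (2 * r) ^ ((γ - d) / 2)) 2, ENNReal.ofReal_ofNat]
        ring

theorem campanato_mul_ball_le_of_half_lt (hu : MemLp u ⊤ (volume.restrict Ω))
    (hv : MemLp v 2 (volume.restrict Ω)) (hdγ : d ≤ γ) (hr : 1 / 2 < r) :
    ENNReal.ofReal (r ^ (-γ)) *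
        ∫⁻ y in Ω ∩ ball x r, ‖u y * v y - ⨍ z in Ω ∩ ball x r, u z * v z‖ₑ ^ 2 ≤
      ENNReal.ofReal (2 ^ γ) * volume (ball (0 : EuclideanSpace ℝ (Fin d)) 1) *
        linftyNorm d Ω u ^ 2 * linftyNorm d Ω v ^ 2 := by
  have hbound := lintegral_enorm_mul_sub_average_sq_le_of_bdd
    ((hv.mul' hu).mono_measure (Measure.restrict_mono Set.inter_subset_left le_rfl))
    (ae_restrict_enorm_le_linftyNorm (Set.inter_subset_left (t := ball x r)))
    (ae_restrict_enorm_le_linftyNorm Set.inter_subset_left)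
  rw [Measure.restrict_apply_univ] at hbound
  calc _ ≤ ENNReal.ofReal (r ^ (-γ)) * ((linftyNorm d Ω u * linftyNorm d Ω v) ^ 2 *
          (ENNReal.ofReal (r ^ d) * volume (ball (0 : EuclideanSpace ℝ (Fin d)) 1))) := by
        grw [hbound, volume_inter_ball_le Ω x (by linarith)]
    _ = ENNReal.ofReal (r ^ (-γ) * r ^ d) * volume (ball (0 : EuclideanSpace ℝ (Fin d)) 1) *
          linftyNorm d Ω u ^ 2 * linftyNorm d Ω v ^ 2 := by
        rw [ENNReal.ofReal_mul (by positivity)]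
        ring
    _ ≤ _ := by grw [rpow_neg_mul_pow_le_two_rpow hr hdγ]
end

theorem campanato_seminorm_mul_general (d : ℕ) (γ : ℝ)
    (hγ : γ ∈ Set.Ioc (d : ℝ) ((d : ℝ) + 2))
    (Ω : Set (EuclideanSpace ℝ (Fin d))) (hΩ : IsOpen Ω)
    (u v : EuclideanSpace ℝ (Fin d) → ℂ)
    (hu_cont : ContinuousOn u Ω)
    (hu_inf : linftyNorm d Ω u ≠ ⊤)
    (hv : MemLp v 2 (volume.restrict Ω)) :
    campanatoSeminorm d Ω γ (fun x => u x * v x) ^ 2 ≤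
      ENNReal.ofReal 2 * linftyNorm d Ω u ^ 2 * campanatoSeminorm d Ω γ v ^ 2 +
      ENNReal.ofReal ((2 : ℝ) ^ (1 + γ - d)) *
        volume (ball (0 : EuclideanSpace ℝ (Fin d)) 1) *
        linftyNorm d Ω v ^ 2 * holderSeminorm d ((γ - d) / 2) Ω u ^ 2 +
      ENNReal.ofReal ((2 : ℝ) ^ γ) *
        volume (ball (0 : EuclideanSpace ℝ (Fin d)) 1) *
        linftyNorm d Ω u ^ 2 * linftyNorm d Ω v ^ 2 := by
  have hdγ : (d : ℝ) ≤ γ := hγ.1.le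
  have hu : MemLp u ⊤ (volume.restrict Ω) :=
    ⟨hu_cont.aestronglyMeasurable hΩ.measurableSet, hu_inf.lt_top⟩
  have hv_local := campanatoSeminorm_sq_le_iff.1 (le_refl (campanatoSeminorm d Ω γ v ^ 2))
  refine campanatoSeminorm_sq_le_iff.2 fun x hx r hr => ?_
  rcases le_or_gt r (1 / 2) with hr2 | hr2
  · grw [campanato_mul_ball_le_of_le_half hΩ hu hv hdγ hr.1 hr2, hv_local x hx r hr,
      ENNReal.ofReal_ofNat]
    exact le_self_add
  · exact (campanato_mul_ball_le_of_half_lt hu hv hdγ hr2).trans le_add_self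

/-- Lemma 3.5: for `γ ∈ (d, d+2]`, `u ∈ C^{(γ−d)/2}(Ω) ∩ L_∞(Ω)` and
`v ∈ L₂(Ω) ∩ L_∞(Ω)` one has
`|||uv|||_{M,γ}² ≤ 2 ‖u‖_∞² |||v|||_{M,γ}² + 2^{1+γ−d} ω_d ‖v‖_∞² |||u|||_{C^{(γ−d)/2}}²
+ 2^γ ω_d ‖u‖_∞² ‖v‖_∞²`, where `ω_d` is the volume of the unit ball in `ℝ^d`. -/
theorem campanato_seminorm_mul (d : ℕ) (γ : ℝ)
    (hγ : γ ∈ Set.Ioc (d : ℝ) ((d : ℝ) + 2))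
    (Ω : Set (EuclideanSpace ℝ (Fin d))) (hΩ : IsOpen Ω)
    (u v : EuclideanSpace ℝ (Fin d) → ℂ)
    (hu_cont : ContinuousOn u Ω)
    (hu_holder : holderSeminorm d ((γ - d) / 2) Ω u ≠ ⊤)
    (hu_inf : linftyNorm d Ω u ≠ ⊤)
    (hv : MemLp v 2 (volume.restrict Ω))
    (hv_inf : linftyNorm d Ω v ≠ ⊤) :
    campanatoSeminorm d Ω γ (fun x => u x * v x) ^ 2 ≤
      ENNReal.ofReal 2 * linftyNorm d Ω u ^ 2 * campanatoSeminorm d Ω γ v ^ 2 +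
      ENNReal.ofReal ((2 : ℝ) ^ (1 + γ - d)) *
        volume (ball (0 : EuclideanSpace ℝ (Fin d)) 1) *
        linftyNorm d Ω v ^ 2 * holderSeminorm d ((γ - d) / 2) Ω u ^ 2 +
      ENNReal.ofReal ((2 : ℝ) ^ γ) *
        volume (ball (0 : EuclideanSpace ℝ (Fin d)) 1) *
        linftyNorm d Ω u ^ 2 * linftyNorm d Ω v ^ 2 :=
  campanato_seminorm_mul_general d γ hγ Ω hΩ u v hu_cont hu_inf hv
end

section
/- Let d ≥ 2, κ ∈ (0,1), c > 0, let Γ ⊆ ℝ^d, and let K : {(z,w) ∈ Γ×Γ : z ≠ w} → ℂ satisfy |K(z,w)| ≤ c |z−w|^{−d} for all z,w ∈ Γ with z ≠ w, and |K(z,w) − K(z',w')| ≤ c (|z−z'| + |w−w'|)^κ |z−w|^{−(d+κ)} for all z, z', w, w' ∈ Γ with z ≠ w, z' ≠ w' and |z−z'| + |w−w'| ≤ ½|z−w|. Let g : ℝ^d → ℝ satisfy |g(x) − g(y)| ≤ |x−y| for all x, y ∈ ℝ^d, and define K_g(z,w) = (g(w) − g(z)) K(z,w). Then |K_g(z,w)|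 ≤ c |z−w|^{−(d−1)} for all z ≠ w in Γ, and |K_g(z,w) − K_g(z',w')| ≤ 3c (|z−z'| + |w−w'|)^κ |z−w|^{−(d−1+κ)} for all z, z', w, w' ∈ Γ with z ≠ w, z' ≠ w' and |z−z'| + |w−w'| ≤ ½|z−w|. -/
/-!
Put `a = g w - g z`, `a' = g w' - g z'` and `s = dist z z' + dist w w' ≤ dist z w / 2`.
Since `|a| ≤ dist z w`, multiplying by `a` lowers the order of the size bound by one.
For the smoothness bound split `a K(z,w) - a' K(z',w') = (a - a') K(z,w) + a' (K(z,w) - K(z',w'))`: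
the first term is at most `s ≤ s^κ (dist z w)^(1-κ)` times the size bound of `K`,
the second at most `|a'| ≤ 3/2 dist z w` times the smoothness bound of `K`, and `1 + 3/2 ≤ 3`.
-/

theorem le_rpow_mul_rpow_one_sub {s D κ : ℝ} (hs : 0 ≤ s) (hsD : s ≤ D) (hκ : κ ≤ 1) :
    s ≤ s ^ κ * D ^ (1 - κ) :=
  calc s = s ^ κ * s ^ (1 - κ) := by
        rw [← Real.rpow_add' hs (by rw [add_sub_cancel]; exact one_ne_zero), add_sub_cancel,
          Real.rpow_one]
    _ ≤ s ^ κ * D ^ (1 - κ) := by gcongr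

theorem norm_ofReal_mul_le_rpow {a : ℝ} {k : ℂ} {D c n : ℝ} (hD : 0 < D) (ha : |a| ≤ D)
    (hk : ‖k‖ ≤ c * D ^ (-n)) : ‖(a : ℂ) * k‖ ≤ c * D ^ (-(n - 1)) :=
  calc ‖(a : ℂ) * k‖ = |a| * ‖k‖ := by rw [norm_mul, Complex.norm_real, Real.norm_eq_abs]
    _ ≤ D * (c * D ^ (-n)) := mul_le_mul ha hk (norm_nonneg k) hD.le
    _ = c * D ^ (-(n - 1)) := by
        rw [mul_left_comm, mul_comm D, ← Real.rpow_add_one hD.ne']; ring_nf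

theorem norm_ofReal_mul_sub_ofReal_mul_le {a a' : ℝ} {k k' : ℂ} {s D c n κ : ℝ}
    (hc : 0 ≤ c) (hκ : κ ≤ 1) (hD : 0 < D) (hs : 0 ≤ s) (hsD : s ≤ D)
    (ha : |a - a'| ≤ s) (ha' : |a'| ≤ 3 / 2 * D) (hk : ‖k‖ ≤ c * D ^ (-n))
    (hkk' : ‖k - k'‖ ≤ c * s ^ κ * D ^ (-(n + κ))) :
    ‖(a : ℂ) * k - (a' : ℂ) * k'‖ ≤ 3 * c * s ^ κ * D ^ (-(n - 1 + κ)) := by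
  have hE : 0 ≤ c * s ^ κ * D ^ (-(n - 1 + κ)) := by positivity
  have h_first : ‖((a - a' : ℝ) : ℂ) * k‖ ≤ c * s ^ κ * D ^ (-(n - 1 + κ)) :=
    calc ‖((a - a' : ℝ) : ℂ) * k‖ = |a - a'| * ‖k‖ := by
          rw [norm_mul, Complex.norm_real, Real.norm_eq_abs]
      _ ≤ (s ^ κ * D ^ (1 - κ)) * (c * D ^ (-n)) :=
          mul_le_mul (ha.trans (le_rpow_mul_rpow_one_sub hs hsD hκ)) hk
            (norm_nonneg k) (by positivity)
      _ = c * s ^ κ * D ^ (-(n - 1 + κ)) := by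
          rw [mul_mul_mul_comm, ← Real.rpow_add hD]; ring_nf
  have h_second : ‖(a' : ℂ) * (k - k')‖ ≤ 3 / 2 * (c * s ^ κ * D ^ (-(n - 1 + κ))) :=
    calc ‖(a' : ℂ) * (k - k')‖ = |a'| * ‖k - k'‖ := by
          rw [norm_mul, Complex.norm_real, Real.norm_eq_abs]
      _ ≤ (3 / 2 * D) * (c * s ^ κ * D ^ (-(n + κ))) :=
          mul_le_mul ha' hkk' (norm_nonneg _) (by positivity)
      _ = 3 / 2 * (c * s ^ κ * D ^ (-(n - 1 + κ))) := by
          rw [mul_assoc, mul_left_comm D, mul_comm D, ← Real.rpow_add_one hD.ne']; ring_nf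
  calc ‖(a : ℂ) * k - (a' : ℂ) * k'‖
        = ‖((a - a' : ℝ) : ℂ) * k + (a' : ℂ) * (k - k')‖ := by push_cast; ring_nf
    _ ≤ c * s ^ κ * D ^ (-(n - 1 + κ)) + 3 / 2 * (c * s ^ κ * D ^ (-(n - 1 + κ))) :=
        (norm_add_le _ _).trans (add_le_add h_first h_second)
    _ ≤ 3 * c * s ^ κ * D ^ (-(n - 1 + κ)) := by linarith

section

variable {X : Type*} [PseudoMetricSpace X] {g : X → ℝ}

theorem abs_sub_sub_sub_le_dist_add_dist (hg : ∀ x y, |g x - g y| ≤ dist x y) (z z' w w' : X) :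
    |g w - g z - (g w' - g z')| ≤ dist z z' + dist w w' :=
  calc |g w - g z - (g w' - g z')| = |(g w - g w') - (g z - g z')| := by ring_nf
    _ ≤ |g w - g w'| + |g z - g z'| := abs_sub _ _
    _ ≤ dist z z' + dist w w' := by linarith [hg w w', hg z z']

theorem abs_sub_le_of_dist_add_dist_le_half (hg : ∀ x y, |g x - g y| ≤ dist x y) {z z' w w' : X}
    (hs : dist z z' + dist w w' ≤ dist z w / 2) : |g w' - g z'| ≤ 3 / 2 * dist z w :=
  calc |g w' - g z'| ≤ dist w' z' := hg w' z'
    _ ≤ dist w' w + dist w z + dist z z' := dist_triangle4 _ _ _ _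
    _ ≤ 3 / 2 * dist z w := by rw [dist_comm w' w, dist_comm w z]; linarith

end

theorem commutator_kernel_CZ_bounds_general (d : ℕ) (κ c : ℝ)
    (hκ : κ ∈ Set.Ioo (0 : ℝ) 1) (hc : 0 < c)
    (Γ : Set (EuclideanSpace ℝ (Fin d)))
    (K : EuclideanSpace ℝ (Fin d) → EuclideanSpace ℝ (Fin d) → ℂ)
    (hK₁ : ∀ z ∈ Γ, ∀ w ∈ Γ, z ≠ w →
      ‖K z w‖ ≤ c * dist z w ^ (-(d : ℝ)))
    (hK₂ : ∀ z ∈ Γ, ∀ z' ∈ Γ, ∀ w ∈ Γ, ∀ w' ∈ Γ,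
      z ≠ w → z' ≠ w' → dist z z' + dist w w' ≤ dist z w / 2 →
      ‖K z w - K z' w'‖ ≤
        c * (dist z z' + dist w w') ^ κ * dist z w ^ (-((d : ℝ) + κ)))
    (g : EuclideanSpace ℝ (Fin d) → ℝ)
    (hg : ∀ x y, |g x - g y| ≤ dist x y) :
    (∀ z ∈ Γ, ∀ w ∈ Γ, z ≠ w →
      ‖(((g w - g z : ℝ)) : ℂ) * K z w‖ ≤ c * dist z w ^ (-((d : ℝ) - 1))) ∧
    (∀ z ∈ Γ, ∀ z' ∈ Γ, ∀ w ∈ Γ, ∀ w' ∈ Γ,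
      z ≠ w → z' ≠ w' → dist z z' + dist w w' ≤ dist z w / 2 →
      ‖(((g w - g z : ℝ)) : ℂ) * K z w - (((g w' - g z' : ℝ)) : ℂ) * K z' w'‖ ≤
        3 * c * (dist z z' + dist w w') ^ κ *
          dist z w ^ (-((d : ℝ) - 1 + κ))) := by
  constructor
  · intro z hz w hw hzw
    exact norm_ofReal_mul_le_rpow (dist_pos.2 hzw) ((hg w z).trans_eq (dist_comm w z))
      (hK₁ z hz w hw hzw)
  · intro z hz z' hz' w hw w' hw' hzw hzw' hs
    have hD : 0 < dist z w := dist_pos.2 hzw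
    exact norm_ofReal_mul_sub_ofReal_mul_le hc.le hκ.2.le hD (by positivity) (by linarith)
      (abs_sub_sub_sub_le_dist_add_dist hg z z' w w') (abs_sub_le_of_dist_add_dist_le_half hg hs)
      (hK₁ z hz w hw hzw) (hK₂ z hz z' hz' w hw w' hw' hzw hzw' hs)

/-- Lemma 9.6 (pointwise estimates): if `K` is a kernel on `Γ × Γ` satisfying
Calderón–Zygmund bounds of order `d` and `g : ℝ^d → ℝ` is `1`-Lipschitz, then
the kernel `K_g(z,w) = (g(w) − g(z)) K(z,w)` satisfies Calderón–Zygmund bounds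
of order `d − 1`. -/
theorem commutator_kernel_CZ_bounds (d : ℕ) (hd : 2 ≤ d) (κ c : ℝ)
    (hκ : κ ∈ Set.Ioo (0 : ℝ) 1) (hc : 0 < c)
    (Γ : Set (EuclideanSpace ℝ (Fin d)))
    (K : EuclideanSpace ℝ (Fin d) → EuclideanSpace ℝ (Fin d) → ℂ)
    (hK₁ : ∀ z ∈ Γ, ∀ w ∈ Γ, z ≠ w →
      ‖K z w‖ ≤ c * dist z w ^ (-(d : ℝ)))
    (hK₂ : ∀ z ∈ Γ, ∀ z' ∈ Γ, ∀ w ∈ Γ, ∀ w' ∈ Γ,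
      z ≠ w → z' ≠ w' → dist z z' + dist w w' ≤ dist z w / 2 →
      ‖K z w - K z' w'‖ ≤
        c * (dist z z' + dist w w') ^ κ * dist z w ^ (-((d : ℝ) + κ)))
    (g : EuclideanSpace ℝ (Fin d) → ℝ)
    (hg : ∀ x y, |g x - g y| ≤ dist x y) :
    (∀ z ∈ Γ, ∀ w ∈ Γ, z ≠ w →
      ‖(((g w - g z : ℝ)) : ℂ) * K z w‖ ≤ c * dist z w ^ (-((d : ℝ) - 1))) ∧
    (∀ z ∈ Γ, ∀ z' ∈ Γ, ∀ w ∈ Γ, ∀ w' ∈ Γ,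
      z ≠ w → z' ≠ w' → dist z z' + dist w w' ≤ dist z w / 2 →
      ‖(((g w - g z : ℝ)) : ℂ) * K z w - (((g w' - g z' : ℝ)) : ℂ) * K z' w'‖ ≤
        3 * c * (dist z z' + dist w w') ^ κ *
          dist z w ^ (-((d : ℝ) - 1 + κ))) :=
  commutator_kernel_CZ_bounds_general d κ c hκ hc Γ K hK₁ hK₂ g hg
end

section
/- Let d ≥ 1, κ ∈ (0,1) and a, b > 0. Then there exists c > 0, depending only on a, b, d and κ, such that the following holds. Let Ω ⊆ ℝ^d be Lebesgue measurable, let t > 0, and let K : Ω×Ω → ℂ be measurable with |K(x,y)| ≤ a t^{−d/2} e^{−b|x−y|²/t} for all x, y ∈ Ω, and |K(x+h,y) − K(x,y)| ≤ a t^{−d/2} (|h|/√t)^κ e^{−b|x−y|²/t} for all x, y ∈ Ω and h ∈ ℝ^d with x+h ∈ Ω and |h| ≤ √t. Then for all ν ∈ (0,κ], p ∈ [1,∞], u ∈ L_p(Ω) and x, x' ∈ Ω, the function (T u)(x) = ∫_Ω K(x,y) u(y) dy satisfies |(T u)(x) − (T u)(x')| ≤ c · t^{−d/(2p)} t^{−ν/2}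 |x−x'|^ν ‖u‖_{L_p(Ω)}. -/
/-!
By Hölder's inequality with the conjugate exponent `q` of `p`, a kernel dominated by
`A t^{-d/2} exp(-b|x-y|²/t)` maps `L_p(Ω)` into bounded functions with norm at most
`A M t^{-d/(2p)}`: the `L_q` norm of the Gaussian is `(π t/(b q))^{d/(2q)}`, and
`M = max 1 (π/b)^{d/2}` bounds `(π/(b q))^{d/(2q)}` for every `q ≥ 1`. Taking `A = a` bounds each
value of `Tu`. If `|x - x'| ≤ √t`, the Hölder bound on `K` applied to the difference kernel
`K(x,·) - K(x',·)` gives `A = a (|x-x'|/√t)^κ ≤ a (|x-x'|/√t)^ν`; if `|x - x'| > √t`, the triangle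
inequality and `1 ≤ (|x-x'|/√t)^ν` suffice.
-/

open MeasureTheory ENNReal Real Module

-- Also for `p = ∞` or `q = ∞`, since `∞.toReal⁻¹ = 0⁻¹ = 0`.
theorem ENNReal.HolderConjugate.inv_toReal_add_inv_toReal {p q : ℝ≥0∞} [hpq : p.HolderConjugate q] :
    p.toReal⁻¹ + q.toReal⁻¹ = 1 := by
  have hsum : p⁻¹ + q⁻¹ = 1 := hpq.inv_add_inv_eq_one
  have hp : p⁻¹ ≠ ∞ := ne_top_of_le_ne_top one_ne_top (hsum ▸ le_self_add)
  have hq : q⁻¹ ≠ ∞ := ne_top_of_le_ne_top one_ne_top (hsum ▸ le_add_self)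
  rw [← toReal_inv, ← toReal_inv, ← toReal_add hp hq, hsum, toReal_one]

theorem norm_sub_le_two_mul_mul_rpow {E : Type*} [SeminormedAddCommGroup E] {v w : E}
    {C s κ ν : ℝ} (hs : 0 ≤ s) (hν : 0 ≤ ν) (hνκ : ν ≤ κ) (hv : ‖v‖ ≤ C) (hw : ‖w‖ ≤ C)
    (hvw : s ≤ 1 → ‖v - w‖ ≤ C * s ^ κ) : ‖v - w‖ ≤ 2 * C * s ^ ν := by
  have hC : 0 ≤ C := (norm_nonneg v).trans hv
  rcases le_or_gt s 1 with hs1 | hs1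
  · calc ‖v - w‖ ≤ C * s ^ κ := hvw hs1
      _ ≤ C * s ^ ν := mul_le_mul_of_nonneg_left (rpow_le_rpow_of_exponent_ge' hs hs1 hν hνκ) hC
      _ ≤ 2 * C * s ^ ν := by nlinarith [rpow_nonneg hs ν]
  · calc ‖v - w‖ ≤ ‖v‖ + ‖w‖ := norm_sub_le v w
      _ ≤ 2 * C * 1 := by linarith
      _ ≤ 2 * C * s ^ ν := by gcongr; exact one_le_rpow hs1.le hν

theorem div_sqrt_rpow {δ t : ℝ} (hδ : 0 ≤ δ) (ht : 0 ≤ t) (ν : ℝ) :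
    (δ / √t) ^ ν = t ^ (-ν / 2) * δ ^ ν := by
  rw [div_rpow hδ (sqrt_nonneg t), sqrt_eq_rpow, ← rpow_mul ht, div_eq_mul_inv, ← rpow_neg ht]
  ring_nf

section

variable {V : Type*} [NormedAddCommGroup V] [InnerProductSpace ℝ V] [FiniteDimensional ℝ V]
  [MeasurableSpace V] [BorelSpace V]

theorem lintegral_ofReal_exp_neg_mul_dist_sq {β : ℝ} (hβ : 0 < β) (x : V) :
    ∫⁻ y, ENNReal.ofReal (exp (-β * dist x y ^ 2)) =
      ENNReal.ofReal ((π / β) ^ (finrank ℝ V / 2 : ℝ)) := by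
  have hgauss := GaussianFourier.integral_rexp_neg_mul_sq_norm (V := V) hβ
  have hint : Integrable fun v : V => exp (-β * ‖v‖ ^ 2) :=
    .of_integral_ne_zero (hgauss ▸ (rpow_pos_of_pos (div_pos pi_pos hβ) _).ne')
  simp_rw [dist_eq_norm]
  rw [lintegral_sub_left_eq_self (fun v => ENNReal.ofReal (exp (-β * ‖v‖ ^ 2))) x,
    ← ofReal_integral_eq_lintegral_ofReal hint (ae_of_all _ fun _ => (exp_pos _).le), hgauss]

noncomputable def gaussianLpConst (b : ℝ) (n : ℕ) : ℝ := max 1 ((π / b) ^ (n / 2 : ℝ))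

theorem one_le_gaussianLpConst (b : ℝ) (n : ℕ) : 1 ≤ gaussianLpConst b n := le_max_left _ _

theorem gaussianLpConst_pos (b : ℝ) (n : ℕ) : 0 < gaussianLpConst b n :=
  one_pos.trans_le (one_le_gaussianLpConst b n)

theorem rpow_le_gaussianLpConst {b r : ℝ} (hb : 0 < b) (n : ℕ) (hr : 1 ≤ r) :
    (π / (b * r)) ^ (n / (2 * r)) ≤ gaussianLpConst b n := by
  have hbase : 0 < π / (b * r) := by positivity
  rcases le_or_gt (π / (b * r)) 1 with hle | hgt
  · exact (rpow_le_one hbase.le hle (by positivity)).trans (one_le_gaussianLpConst b n)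
  · refine le_trans ?_ (le_max_right _ _)
    calc (π / (b * r)) ^ (n / (2 * r))
        ≤ (π / (b * r)) ^ (n / 2 : ℝ) :=
          rpow_le_rpow_of_exponent_le hgt.le (by gcongr; linarith)
      _ ≤ (π / b) ^ (n / 2 : ℝ) := by gcongr; nlinarith

theorem eLpNorm_exp_neg_mul_dist_sq_div_le {b t : ℝ} (hb : 0 < b) (ht : 0 < t) (x : V)
    {q : ℝ≥0∞} (hq : 1 ≤ q) :
    eLpNorm (fun y => exp (-b * dist x y ^ 2 / t)) q volume ≤
      ENNReal.ofReal (gaussianLpConst b (finrank ℝ V) * t ^ (finrank ℝ V / (2 * q.toReal))) := by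
  set n := finrank ℝ V
  rcases eq_or_ne q ∞ with rfl | hq_top
  · -- here `∞.toReal = 0`, so the power of `t` is `t ^ (n / 0) = 1`
    have hle_one (y) : ‖exp (-b * dist x y ^ 2 / t)‖ ≤ 1 := by
      rw [norm_of_nonneg (exp_pos _).le, exp_le_one_iff, neg_mul]
      exact div_nonpos_of_nonpos_of_nonneg (neg_nonpos.2 (by positivity)) ht.le
    rw [eLpNorm_exponent_top, toReal_top, mul_zero, _root_.div_zero, Real.rpow_zero, mul_one]
    exact (eLpNormEssSup_le_of_ae_bound (ae_of_all _ hle_one)).trans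
      (ofReal_le_ofReal (one_le_gaussianLpConst b n))
  rw [eLpNorm_eq_lintegral_rpow_enorm_toReal (by positivity) hq_top]
  set r := q.toReal
  have hr : 1 ≤ r := by
    simpa using (ENNReal.toReal_le_toReal one_ne_top hq_top).2 hq
  have hr0 : 0 < r := by linarith
  have hpow : ∀ y, ‖exp (-b * dist x y ^ 2 / t)‖ₑ ^ r =
      ENNReal.ofReal (exp (-(b * r / t) * dist x y ^ 2)) := fun y => by
    rw [Real.enorm_of_nonneg (exp_pos _).le, ofReal_rpow_of_nonneg (exp_pos _).le hr0.le,
      ← exp_mul]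
    ring_nf
  have hscale : ((π / (b * r / t)) ^ (n / 2 : ℝ)) ^ (1 / r) =
      (π / (b * r)) ^ (n / (2 * r)) * t ^ (n / (2 * r)) := by
    rw [show π / (b * r / t) = π / (b * r) * t by field_simp, mul_rpow (by positivity) ht.le,
      mul_rpow (by positivity) (by positivity), ← rpow_mul (by positivity), ← rpow_mul ht.le]
    ring_nf
  simp_rw [hpow]
  rw [lintegral_ofReal_exp_neg_mul_dist_sq (by positivity),
    ofReal_rpow_of_nonneg (by positivity) (by positivity), hscale]
  gcongr
  exact rpow_le_gaussianLpConst hb n hr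

variable {𝕜 : Type*} [NormedRing 𝕜] {b t A : ℝ} {s : Set V} {p : ℝ≥0∞} {f u : V → 𝕜}

theorem eLpNorm_mul_le_of_norm_le_gaussian (hb : 0 < b) (ht : 0 < t) (hs : MeasurableSet s)
    (hp : 1 ≤ p) (hf_meas : AEStronglyMeasurable f (volume.restrict s))
    (hu : AEStronglyMeasurable u (volume.restrict s)) (z : V)
    (hf : ∀ y ∈ s, ‖f y‖ ≤ A * t ^ (-(finrank ℝ V : ℝ) / 2) * exp (-b * dist z y ^ 2 / t)) :
    eLpNorm (fun y => f y * u y) 1 (volume.restrict s) ≤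
      ENNReal.ofReal (A * gaussianLpConst b (finrank ℝ V) *
        t ^ (-((finrank ℝ V : ℝ) / (2 * p.toReal)))) * eLpNorm u p (volume.restrict s) := by
  set n := finrank ℝ V
  have hpq := ENNReal.HolderConjugate.conjExponent hp
  set q := p.conjExponent
  have hq : 1 ≤ q := le_self_add
  have hfq : eLpNorm f q (volume.restrict s) ≤ ENNReal.ofReal (A * t ^ (-(n : ℝ) / 2)) *
      ENNReal.ofReal (gaussianLpConst b n * t ^ (n / (2 * q.toReal))) := by
    refine (eLpNorm_le_mul_eLpNorm_of_ae_le_mul (ae_restrict_of_forall_mem hs fun y hy => ?_)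
      q).trans (mul_le_mul_right ((eLpNorm_restrict_le _ _ _ _).trans
        (eLpNorm_exp_neg_mul_dist_sq_div_le hb ht z hq)) _)
    rw [norm_of_nonneg (exp_pos _).le]
    exact hf y hy
  have hexp : t ^ (-(n : ℝ) / 2) * t ^ (n / (2 * q.toReal)) = t ^ (-(n / (2 * p.toReal))) := by
    rw [← rpow_add ht]
    congr 1
    linear_combination (n / 2 : ℝ) * hpq.inv_toReal_add_inv_toReal
  have : q.HolderConjugate p := hpq.symm
  calc eLpNorm (fun y => f y * u y) 1 (volume.restrict s)
      ≤ (1 : NNReal) * eLpNorm f q (volume.restrict s) * eLpNorm u p (volume.restrict s) :=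
        eLpNorm_le_eLpNorm_mul_eLpNorm_of_nnnorm hf_meas hu (· * ·) 1
          (ae_of_all _ fun y => by simpa using nnnorm_mul_le (f y) (u y))
    _ ≤ ENNReal.ofReal (A * t ^ (-(n : ℝ) / 2)) *
          ENNReal.ofReal (gaussianLpConst b n * t ^ (n / (2 * q.toReal))) *
          eLpNorm u p (volume.restrict s) := by
        rw [ENNReal.coe_one, one_mul]
        gcongr
    _ = _ := by
        rw [← ofReal_mul' (mul_nonneg (gaussianLpConst_pos b n).le (by positivity)), ← hexp]
        ring_nf

theorem integrable_mul_of_norm_le_gaussian (hb : 0 < b) (ht : 0 < t) (hs : MeasurableSet s)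
    (hp : 1 ≤ p) (hf_meas : AEStronglyMeasurable f (volume.restrict s))
    (hu : MemLp u p (volume.restrict s)) (z : V)
    (hf : ∀ y ∈ s, ‖f y‖ ≤ A * t ^ (-(finrank ℝ V : ℝ) / 2) * exp (-b * dist z y ^ 2 / t)) :
    Integrable (fun y => f y * u y) (volume.restrict s) :=
  memLp_one_iff_integrable.1 ⟨hf_meas.mul hu.1,
    (eLpNorm_mul_le_of_norm_le_gaussian hb ht hs hp hf_meas hu.1 z hf).trans_lt
      (mul_lt_top ofReal_lt_top hu.eLpNorm_lt_top)⟩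

theorem norm_setIntegral_mul_le_of_norm_le_gaussian [NormedSpace ℝ 𝕜] (hb : 0 < b) (ht : 0 < t)
    (hA : 0 ≤ A) (hs : MeasurableSet s) (hp : 1 ≤ p)
    (hf_meas : AEStronglyMeasurable f (volume.restrict s)) (hu : MemLp u p (volume.restrict s))
    (z : V)
    (hf : ∀ y ∈ s, ‖f y‖ ≤ A * t ^ (-(finrank ℝ V : ℝ) / 2) * exp (-b * dist z y ^ 2 / t)) :
    ‖∫ y in s, f y * u y‖ ≤ A * gaussianLpConst b (finrank ℝ V) *
      t ^ (-((finrank ℝ V : ℝ) / (2 * p.toReal))) * (eLpNorm u p (volume.restrict s)).toReal := by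
  set n := finrank ℝ V
  calc ‖∫ y in s, f y * u y‖ = ‖∫ y in s, f y * u y‖ₑ.toReal := (toReal_enorm _).symm
    _ ≤ (ENNReal.ofReal (A * gaussianLpConst b n * t ^ (-(n / (2 * p.toReal)))) *
          eLpNorm u p (volume.restrict s)).toReal := by
        refine toReal_mono (mul_ne_top ofReal_ne_top hu.eLpNorm_ne_top) ?_
        exact (enorm_integral_le_lintegral_enorm _).trans_eq eLpNorm_one_eq_lintegral_enorm.symm
          |>.trans (eLpNorm_mul_le_of_norm_le_gaussian hb ht hs hp hf_meas hu.1 z hf)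
    _ = _ := by
        have := gaussianLpConst_pos b n
        rw [toReal_mul, toReal_ofReal (by positivity)]

theorem norm_setIntegral_sub_mul_le_of_dist_le_sqrt [NormedSpace ℝ 𝕜] {K : V → V → 𝕜}
    {a κ : ℝ} {x x' : V} (hb : 0 < b) (ht : 0 < t) (ha : 0 ≤ a) (hs : MeasurableSet s)
    (hp : 1 ≤ p) (hu : MemLp u p (volume.restrict s))
    (hK_meas : ∀ z, AEStronglyMeasurable (K z) (volume.restrict s))
    (hK_size : ∀ x ∈ s, ∀ y ∈ s,
      ‖K x y‖ ≤ a * t ^ (-(finrank ℝ V : ℝ) / 2) * exp (-b * dist x y ^ 2 / t))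
    (hK_holder : ∀ x ∈ s, ∀ y ∈ s, ∀ h : V, x + h ∈ s → ‖h‖ ≤ √t →
      ‖K (x + h) y - K x y‖ ≤
        a * t ^ (-(finrank ℝ V : ℝ) / 2) * (‖h‖ / √t) ^ κ * exp (-b * dist x y ^ 2 / t))
    (hx : x ∈ s) (hx' : x' ∈ s) (hxx' : dist x x' ≤ √t) :
    ‖(∫ y in s, K x y * u y) - ∫ y in s, K x' y * u y‖ ≤
      a * (dist x x' / √t) ^ κ * gaussianLpConst b (finrank ℝ V) *
        t ^ (-((finrank ℝ V : ℝ) / (2 * p.toReal))) * (eLpNorm u p (volume.restrict s)).toReal := by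
  have hK_diff (y) (hy : y ∈ s) : ‖K x y - K x' y‖ ≤ a * (dist x x' / √t) ^ κ *
      t ^ (-(finrank ℝ V : ℝ) / 2) * exp (-b * dist x' y ^ 2 / t) := by
    have hnorm : ‖x - x'‖ = dist x x' := (dist_eq_norm x x').symm
    have := hK_holder x' hx' y hy (x - x') (by rwa [add_sub_cancel]) (hnorm ▸ hxx')
    rw [add_sub_cancel, hnorm] at this
    exact this.trans_eq (by ring)
  rw [← integral_sub
    (integrable_mul_of_norm_le_gaussian hb ht hs hp (hK_meas x) hu x (hK_size x hx))
    (integrable_mul_of_norm_le_gaussian hb ht hs hp (hK_meas x') hu x' (hK_size x' hx'))]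
  simp_rw [← sub_mul]
  exact norm_setIntegral_mul_le_of_norm_le_gaussian (f := fun y => K x y - K x' y) hb ht
    (by positivity) hs hp ((hK_meas x).sub (hK_meas x')) hu x' hK_diff

theorem norm_setIntegral_sub_mul_le_rpow_dist [NormedSpace ℝ 𝕜] {K : V → V → 𝕜}
    {a κ ν : ℝ} {x x' : V} (hb : 0 < b) (ht : 0 < t) (ha : 0 ≤ a) (hs : MeasurableSet s)
    (hp : 1 ≤ p) (hu : MemLp u p (volume.restrict s))
    (hK_meas : ∀ z, AEStronglyMeasurable (K z) (volume.restrict s))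
    (hK_size : ∀ x ∈ s, ∀ y ∈ s,
      ‖K x y‖ ≤ a * t ^ (-(finrank ℝ V : ℝ) / 2) * exp (-b * dist x y ^ 2 / t))
    (hK_holder : ∀ x ∈ s, ∀ y ∈ s, ∀ h : V, x + h ∈ s → ‖h‖ ≤ √t →
      ‖K (x + h) y - K x y‖ ≤
        a * t ^ (-(finrank ℝ V : ℝ) / 2) * (‖h‖ / √t) ^ κ * exp (-b * dist x y ^ 2 / t))
    (hν : 0 ≤ ν) (hνκ : ν ≤ κ) (hx : x ∈ s) (hx' : x' ∈ s) :
    ‖(∫ y in s, K x y * u y) - ∫ y in s, K x' y * u y‖ ≤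
      2 * a * gaussianLpConst b (finrank ℝ V) * t ^ (-((finrank ℝ V : ℝ) / (2 * p.toReal))) *
        t ^ (-ν / 2) * dist x x' ^ ν * (eLpNorm u p (volume.restrict s)).toReal := by
  set C := a * gaussianLpConst b (finrank ℝ V) * t ^ (-((finrank ℝ V : ℝ) / (2 * p.toReal))) *
    (eLpNorm u p (volume.restrict s)).toReal
  have hT (z) (hz : z ∈ s) : ‖∫ y in s, K z y * u y‖ ≤ C :=
    norm_setIntegral_mul_le_of_norm_le_gaussian hb ht ha hs hp (hK_meas z) hu z (hK_size z hz)
  have hT_sub (hxx' : dist x x' / √t ≤ 1) :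
      ‖(∫ y in s, K x y * u y) - ∫ y in s, K x' y * u y‖ ≤ C * (dist x x' / √t) ^ κ :=
    (norm_setIntegral_sub_mul_le_of_dist_le_sqrt hb ht ha hs hp hu hK_meas hK_size hK_holder hx
      hx' ((div_le_one (sqrt_pos.2 ht)).1 hxx')).trans_eq (by ring)
  calc _ ≤ 2 * C * (dist x x' / √t) ^ ν :=
        norm_sub_le_two_mul_mul_rpow (by positivity) hν hνκ (hT x hx) (hT x' hx') hT_sub
    _ = _ := by rw [div_sqrt_rpow dist_nonneg ht.le]; ring

end

theorem holder_gaussian_bound_Lp_Holder_general (d : ℕ) (κ a b : ℝ)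
    (ha : 0 < a) (hb : 0 < b) :
    ∃ c : ℝ, 0 < c ∧
      ∀ (Ω : Set (EuclideanSpace ℝ (Fin d))), MeasurableSet Ω →
      ∀ t : ℝ, 0 < t →
      ∀ K : EuclideanSpace ℝ (Fin d) → EuclideanSpace ℝ (Fin d) → ℂ,
        Measurable (Function.uncurry K) →
        (∀ x ∈ Ω, ∀ y ∈ Ω,
          ‖K x y‖ ≤ a * t ^ (-(d : ℝ) / 2) * Real.exp (-b * dist x y ^ 2 / t)) →
        (∀ x ∈ Ω, ∀ y ∈ Ω, ∀ h : EuclideanSpace ℝ (Fin d),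
          x + h ∈ Ω → ‖h‖ ≤ Real.sqrt t →
          ‖K (x + h) y - K x y‖ ≤
            a * t ^ (-(d : ℝ) / 2) * (‖h‖ / Real.sqrt t) ^ κ *
              Real.exp (-b * dist x y ^ 2 / t)) →
      ∀ ν : ℝ, ν ∈ Set.Ioc (0 : ℝ) κ →
      ∀ p : ℝ≥0∞, 1 ≤ p →
      ∀ u : EuclideanSpace ℝ (Fin d) → ℂ, MemLp u p (volume.restrict Ω) →
      ∀ x ∈ Ω, ∀ x' ∈ Ω,
        ‖(∫ y in Ω, K x y * u y) - ∫ y in Ω, K x' y * u y‖ ≤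
          c * t ^ (-((d : ℝ) / (2 * p.toReal))) * t ^ (-ν / 2) *
            dist x x' ^ ν * (eLpNorm u p (volume.restrict Ω)).toReal := by
  refine ⟨2 * a * gaussianLpConst b d, by have := gaussianLpConst_pos b d; positivity, ?_⟩
  intro Ω hΩ t ht K hK hK_size hK_holder ν hν p hp u hu x hx x' hx'
  have hdim : finrank ℝ (EuclideanSpace ℝ (Fin d)) = d := finrank_euclideanSpace_fin
  simpa only [hdim] using norm_setIntegral_sub_mul_le_rpow_dist (K := K) hb ht ha.le hΩ hp hu
    (fun z => (hK.comp measurable_prodMk_left).aestronglyMeasurable)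
    (by simpa only [hdim] using hK_size) (by simpa only [hdim] using hK_holder) hν.1.le hν.2 hx hx'

/-- Hölder–Gaussian kernel bounds imply `L_p → C^ν` bounds (content of the
proof of Theorem 4.1(e)): if `|K(x,y)| ≤ a t^{−d/2} e^{−b|x−y|²/t}` and
`|K(x+h,y) − K(x,y)| ≤ a t^{−d/2} (|h|/√t)^κ e^{−b|x−y|²/t}` for `|h| ≤ √t`,
then for `ν ∈ (0,κ]`, `p ∈ [1,∞]` and `u ∈ L_p(Ω)` the function
`(Tu)(x) = ∫_Ω K(x,y) u(y) dy` satisfies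
`|(Tu)(x) − (Tu)(x')| ≤ c t^{−d/(2p)} t^{−ν/2} |x−x'|^ν ‖u‖_{L_p(Ω)}`,
with `c` depending only on `a`, `b`, `d` and `κ`. -/
theorem holder_gaussian_bound_Lp_Holder (d : ℕ) (hd : 1 ≤ d) (κ a b : ℝ)
    (hκ : κ ∈ Set.Ioo (0 : ℝ) 1) (ha : 0 < a) (hb : 0 < b) :
    ∃ c : ℝ, 0 < c ∧
      ∀ (Ω : Set (EuclideanSpace ℝ (Fin d))), MeasurableSet Ω →
      ∀ t : ℝ, 0 < t →
      ∀ K : EuclideanSpace ℝ (Fin d) → EuclideanSpace ℝ (Fin d) → ℂ,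
        Measurable (Function.uncurry K) →
        (∀ x ∈ Ω, ∀ y ∈ Ω,
          ‖K x y‖ ≤ a * t ^ (-(d : ℝ) / 2) * Real.exp (-b * dist x y ^ 2 / t)) →
        (∀ x ∈ Ω, ∀ y ∈ Ω, ∀ h : EuclideanSpace ℝ (Fin d),
          x + h ∈ Ω → ‖h‖ ≤ Real.sqrt t →
          ‖K (x + h) y - K x y‖ ≤
            a * t ^ (-(d : ℝ) / 2) * (‖h‖ / Real.sqrt t) ^ κ *
              Real.exp (-b * dist x y ^ 2 / t)) →
      ∀ ν : ℝ, ν ∈ Set.Ioc (0 : ℝ) κ →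
      ∀ p : ℝ≥0∞, 1 ≤ p →
      ∀ u : EuclideanSpace ℝ (Fin d) → ℂ, MemLp u p (volume.restrict Ω) →
      ∀ x ∈ Ω, ∀ x' ∈ Ω,
        ‖(∫ y in Ω, K x y * u y) - ∫ y in Ω, K x' y * u y‖ ≤
          c * t ^ (-((d : ℝ) / (2 * p.toReal))) * t ^ (-ν / 2) *
            dist x x' ^ ν * (eLpNorm u p (volume.restrict Ω)).toReal :=
  holder_gaussian_bound_Lp_Holder_general d κ a b ha hb
end

section
/- Let d ≥ 2 be an integer, m ∈ {0,1,2}, κ ∈ (0,1), b > 0 and ω < 0. Then there exists c > 0 such that ∫₀^∞ t^{−(d+m)/2} (√t + r)^{−κ} e^{−b r²/t} e^{ω t} dt ≤ c · r^{−(d−2+m+κ)} for all r ∈ (0,∞). -/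
open MeasureTheory ENNReal

/-- Laplace-transform estimate underlying the Hölder continuity of the Green
function (Theorem 5.1): for integers `d ≥ 2`, `m ∈ {0,1,2}`, `κ ∈ (0,1)`,
`b > 0` and `ω < 0` there is `c > 0` such that
`∫₀^∞ t^{−(d+m)/2} (√t + r)^{−κ} e^{−b r²/t} e^{ωt} dt ≤ c r^{−(d−2+m+κ)}`
for all `r > 0`. -/
theorem laplace_transform_green_holder_bound (d m : ℕ) (hd : 2 ≤ d) (hm : m ≤ 2)
    (κ b ω : ℝ) (hκ : κ ∈ Set.Ioo (0 : ℝ) 1) (hb : 0 < b) (hω : ω < 0) :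
    ∃ c : ℝ, 0 < c ∧
      ∀ r : ℝ, 0 < r →
        ∫⁻ t in Set.Ioi (0 : ℝ),
            ENNReal.ofReal (t ^ (-(((d : ℝ) + m) / 2)) *
              (Real.sqrt t + r) ^ (-κ) *
              Real.exp (-b * r ^ 2 / t) * Real.exp (ω * t)) ≤
          ENNReal.ofReal (c * r ^ (-((d : ℝ) - 2 + m + κ))) := by
  obtain ⟨hκ0, hκ1⟩ := hκ
  set A : ℝ := (d : ℝ) + m with hA
  have hA2 : (2 : ℝ) ≤ A := by
    have : (2 : ℝ) ≤ (d : ℝ) := by exact_mod_cast hd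
    have : (0 : ℝ) ≤ (m : ℝ) := Nat.cast_nonneg m
    simp only [hA]; linarith
  set n : ℕ := d + m with hn
  have hnA : (n : ℝ) = A := by push_cast [hn, hA]; ring
  set s : ℝ := (A + κ) / 2 with hs
  have hs1 : 1 < s := by simp only [hs]; linarith
  set C1 : ℝ := ((Nat.factorial n : ℕ) : ℝ) * b⁻¹ ^ n with hC1
  have hC1pos : 0 < C1 := by positivity
  have hs0 : 0 < s - 1 := by linarith
  refine ⟨C1 + 1 / (s - 1), by positivity, ?_⟩
  intro r hr
  have hr2 : (0 : ℝ) < r ^ 2 := by positivity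
  -- exponent identity
  have hexp : -((d : ℝ) - 2 + m + κ) = -(A + κ) + 2 := by simp only [hA]; ring
  -- split the integral
  rw [← Set.Ioc_union_Ioi_eq_Ioi hr2.le,
    lintegral_union measurableSet_Ioi (Set.Ioc_disjoint_Ioi le_rfl)]
  have key1 : ∫⁻ t in Set.Ioc (0:ℝ) (r^2),
      ENNReal.ofReal (t ^ (-(A / 2)) * (Real.sqrt t + r) ^ (-κ) *
        Real.exp (-b * r ^ 2 / t) * Real.exp (ω * t)) ≤
      ENNReal.ofReal (C1 * r ^ (-((d : ℝ) - 2 + m + κ))) := by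
    calc ∫⁻ t in Set.Ioc (0:ℝ) (r^2),
        ENNReal.ofReal (t ^ (-(A / 2)) * (Real.sqrt t + r) ^ (-κ) *
          Real.exp (-b * r ^ 2 / t) * Real.exp (ω * t))
        ≤ ∫⁻ _ in Set.Ioc (0:ℝ) (r^2), ENNReal.ofReal (C1 * r ^ (-(A + κ))) := by
          refine setLIntegral_mono measurable_const fun t ht => ?_
          refine ENNReal.ofReal_le_ofReal ?_
          obtain ⟨ht0, htr⟩ := ht
          have h1 : Real.exp (ω * t) ≤ 1 :=
            Real.exp_le_one_iff.2 (mul_nonpos_of_nonpos_of_nonneg hω.le ht0.le)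
          have h2 : (Real.sqrt t + r) ^ (-κ) ≤ r ^ (-κ) :=
            Real.rpow_le_rpow_of_nonpos hr (le_add_of_nonneg_left (Real.sqrt_nonneg t))
              (neg_nonpos.2 hκ0.le)
          have hX : 0 < b * r ^ 2 / t := by positivity
          have h3 : Real.exp (-b * r ^ 2 / t) ≤ ((Nat.factorial n : ℕ) : ℝ) * (t / (b * r ^ 2)) ^ n := by
            have h30 := Real.pow_div_factorial_le_exp (x := b * r ^ 2 / t) hX.le n
            have hfac : (0:ℝ) < ((Nat.factorial n : ℕ) : ℝ) := by positivity
            have h31 : (Real.exp (b * r ^ 2 / t))⁻¹ ≤ ((b * r ^ 2 / t) ^ n / ((Nat.factorial n : ℕ) : ℝ))⁻¹ := by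
              apply inv_anti₀ (by positivity) h30
            rw [show -b * r ^ 2 / t = -(b * r ^ 2 / t) by ring, Real.exp_neg]
            calc (Real.exp (b * r ^ 2 / t))⁻¹ ≤ ((b * r ^ 2 / t) ^ n / ((Nat.factorial n : ℕ) : ℝ))⁻¹ := h31
              _ = ((Nat.factorial n : ℕ) : ℝ) * (t / (b * r ^ 2)) ^ n := by
                  rw [inv_div, div_eq_mul_inv, ← inv_pow, inv_div]
          have h4 : t ^ (-(A / 2)) * (t / (b * r ^ 2)) ^ n ≤ b⁻¹ ^ n * r ^ (-A) := by
            have e1 : (t / (b * r ^ 2)) ^ n = t ^ (n:ℝ) * b⁻¹ ^ n * ((r ^ 2) ^ n)⁻¹ := by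
              rw [Real.rpow_natCast, div_pow, mul_pow, inv_pow]
              field_simp
            rw [e1, ← mul_assoc, ← mul_assoc, ← Real.rpow_add ht0]
            have e2 : -(A / 2) + (n:ℝ) = A / 2 := by rw [hnA]; ring
            rw [e2]
            have e3 : t ^ (A/2) ≤ (r ^ 2) ^ (A/2) :=
              Real.rpow_le_rpow ht0.le htr (by linarith)
            have e4 : ((r:ℝ) ^ 2) ^ (A/2) = r ^ A := by
              rw [← Real.rpow_natCast r 2, ← Real.rpow_mul hr.le]
              norm_num
              ring_nf
            have e5 : (((r:ℝ) ^ 2) ^ n)⁻¹ = r ^ (-(2 * (n:ℝ))) := by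
              rw [← Real.rpow_natCast (r^2) n, ← Real.rpow_natCast r 2,
                ← Real.rpow_mul hr.le, ← Real.rpow_neg hr.le]
              norm_num
            have e6 : r ^ A * r ^ (-(2 * (n:ℝ))) = r ^ (-A) := by
              rw [← Real.rpow_add hr, hnA]; ring_nf
            calc t ^ (A/2) * b⁻¹ ^ n * ((r ^ 2) ^ n)⁻¹
                ≤ (r ^ 2) ^ (A/2) * b⁻¹ ^ n * ((r ^ 2) ^ n)⁻¹ := by
                  have : (0:ℝ) ≤ b⁻¹ ^ n * ((r ^ 2) ^ n)⁻¹ := by positivity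
                  nlinarith [this, e3]
              _ = b⁻¹ ^ n * (r ^ A * r ^ (-(2 * (n:ℝ)))) := by rw [e4, e5]; ring
              _ = b⁻¹ ^ n * r ^ (-A) := by rw [e6]
          -- combine
          have hnn1 : (0:ℝ) ≤ t ^ (-(A / 2)) := Real.rpow_nonneg ht0.le _
          have hnn2 : (0:ℝ) ≤ (Real.sqrt t + r) ^ (-κ) := Real.rpow_nonneg (by positivity) _
          calc t ^ (-(A / 2)) * (Real.sqrt t + r) ^ (-κ) * Real.exp (-b * r ^ 2 / t)
                * Real.exp (ω * t)
              ≤ t ^ (-(A / 2)) * r ^ (-κ) * (((Nat.factorial n : ℕ) : ℝ) * (t / (b * r ^ 2)) ^ n) * 1 := by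
                have := Real.exp_pos (-b * r ^ 2 / t)
                have := Real.exp_pos (ω * t)
                have hrκ : (0:ℝ) ≤ r ^ (-κ) := Real.rpow_nonneg hr.le _
                apply mul_le_mul _ h1 (Real.exp_pos _).le (by positivity)
                apply mul_le_mul _ h3 (Real.exp_pos _).le (by positivity)
                exact mul_le_mul_of_nonneg_left h2 hnn1
            _ = ((Nat.factorial n : ℕ) : ℝ) * (t ^ (-(A / 2)) * (t / (b * r ^ 2)) ^ n) * r ^ (-κ) := by ring
            _ ≤ ((Nat.factorial n : ℕ) : ℝ) * (b⁻¹ ^ n * r ^ (-A)) * r ^ (-κ) := by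
                have hrκ : (0:ℝ) ≤ r ^ (-κ) := Real.rpow_nonneg hr.le _
                have hfac : (0:ℝ) ≤ (((Nat.factorial n : ℕ) : ℝ) : ℝ) := by positivity
                apply mul_le_mul_of_nonneg_right _ hrκ
                exact mul_le_mul_of_nonneg_left h4 hfac
            _ = C1 * (r ^ (-A) * r ^ (-κ)) := by rw [hC1]; ring
            _ = C1 * r ^ (-(A + κ)) := by rw [← Real.rpow_add hr]; ring_nf
      _ = ENNReal.ofReal (C1 * r ^ (-(A + κ))) * volume (Set.Ioc (0:ℝ) (r^2)) :=
          setLIntegral_const _ _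
      _ = ENNReal.ofReal (C1 * r ^ (-((d : ℝ) - 2 + m + κ))) := by
          rw [Real.volume_Ioc, ← ENNReal.ofReal_mul (by positivity)]
          congr 1
          rw [hexp, Real.rpow_add hr, sub_zero]
          rw [show ((r:ℝ) ^ (2:ℝ)) = r ^ (2:ℕ) by rw [← Real.rpow_natCast r 2]; norm_num]
          ring
  have key2 : ∫⁻ t in Set.Ioi (r^2),
      ENNReal.ofReal (t ^ (-(A / 2)) * (Real.sqrt t + r) ^ (-κ) *
        Real.exp (-b * r ^ 2 / t) * Real.exp (ω * t)) ≤
      ENNReal.ofReal ((1 / (s - 1)) * r ^ (-((d : ℝ) - 2 + m + κ))) := by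
    calc ∫⁻ t in Set.Ioi (r^2),
        ENNReal.ofReal (t ^ (-(A / 2)) * (Real.sqrt t + r) ^ (-κ) *
          Real.exp (-b * r ^ 2 / t) * Real.exp (ω * t))
        ≤ ∫⁻ t in Set.Ioi (r^2), ENNReal.ofReal (t ^ (-s)) := by
          refine setLIntegral_mono (by fun_prop) fun t ht => ?_
          refine ENNReal.ofReal_le_ofReal ?_
          have ht0 : 0 < t := lt_trans hr2 ht
          have h1 : Real.exp (ω * t) ≤ 1 :=
            Real.exp_le_one_iff.2 (mul_nonpos_of_nonpos_of_nonneg hω.le ht0.le)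
          have h2 : Real.exp (-b * r ^ 2 / t) ≤ 1 := by
            apply Real.exp_le_one_iff.2
            rw [show -b * r ^ 2 / t = -(b * r ^ 2 / t) by ring]
            exact neg_nonpos.2 (by positivity)
          have h3 : (Real.sqrt t + r) ^ (-κ) ≤ t ^ (-(κ/2)) := by
            have hst : 0 < Real.sqrt t := Real.sqrt_pos.2 ht0
            have := Real.rpow_le_rpow_of_nonpos hst (le_add_of_nonneg_right hr.le)
              (neg_nonpos.2 hκ0.le)
            calc (Real.sqrt t + r) ^ (-κ) ≤ (Real.sqrt t) ^ (-κ) := this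
              _ = t ^ (-(κ/2)) := by
                  rw [Real.sqrt_eq_rpow, ← Real.rpow_mul ht0.le]
                  ring_nf
          have hnn1 : (0:ℝ) ≤ t ^ (-(A / 2)) := Real.rpow_nonneg ht0.le _
          calc t ^ (-(A / 2)) * (Real.sqrt t + r) ^ (-κ) * Real.exp (-b * r ^ 2 / t)
                * Real.exp (ω * t)
              ≤ t ^ (-(A / 2)) * t ^ (-(κ/2)) * 1 * 1 := by
                apply mul_le_mul _ h1 (Real.exp_pos _).le (by positivity)
                apply mul_le_mul _ h2 (Real.exp_pos _).le (by positivity)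
                exact mul_le_mul_of_nonneg_left h3 hnn1
            _ = t ^ (-s) := by
                rw [mul_one, mul_one, ← Real.rpow_add ht0, hs]; ring_nf
      _ = ENNReal.ofReal (∫ t in Set.Ioi (r^2), t ^ (-s)) := by
          rw [ofReal_integral_eq_lintegral_ofReal]
          · exact integrableOn_Ioi_rpow_of_lt (by simpa using neg_lt_neg hs1) hr2
          · filter_upwards [ae_restrict_mem measurableSet_Ioi] with t ht
            exact Real.rpow_nonneg (le_of_lt (lt_trans hr2 ht)) _
      _ = ENNReal.ofReal ((1 / (s - 1)) * r ^ (-((d : ℝ) - 2 + m + κ))) := by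
          rw [integral_Ioi_rpow_of_lt (by simpa using neg_lt_neg hs1) hr2]
          congr 1
          have e1 : ((r:ℝ) ^ 2) ^ (-s + 1) = r ^ (-((d : ℝ) - 2 + m + κ)) := by
            rw [← Real.rpow_natCast r 2, ← Real.rpow_mul hr.le]
            congr 1
            push_cast [hs, hA]
            ring
          rw [e1, show -s + 1 = -(s - 1) by ring, div_neg, neg_div, neg_neg, one_div,
            inv_mul_eq_div]
  calc (∫⁻ t in Set.Ioc (0:ℝ) (r^2),
        ENNReal.ofReal (t ^ (-(A / 2)) * (Real.sqrt t + r) ^ (-κ) *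
          Real.exp (-b * r ^ 2 / t) * Real.exp (ω * t))) +
      ∫⁻ t in Set.Ioi (r^2),
        ENNReal.ofReal (t ^ (-(A / 2)) * (Real.sqrt t + r) ^ (-κ) *
          Real.exp (-b * r ^ 2 / t) * Real.exp (ω * t))
      ≤ ENNReal.ofReal (C1 * r ^ (-((d : ℝ) - 2 + m + κ))) +
        ENNReal.ofReal ((1 / (s - 1)) * r ^ (-((d : ℝ) - 2 + m + κ))) :=
        add_le_add key1 key2
    _ = ENNReal.ofReal ((C1 + 1 / (s - 1)) * r ^ (-((d : ℝ) - 2 + m + κ))) := by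
        rw [← ENNReal.ofReal_add (by positivity) (by positivity)]
        ring_nf
end

section
/- Let H be a complex Hilbert space and let Y be a normed space which is continuously and densely embedded into H. Let T, S : Y → Y be bounded linear operators such that (T y₁, y₂)_H = (y₁, S y₂)_H for all y₁, y₂ ∈ Y. Then T extends to a bounded linear operator T̂ on H, and ‖T̂‖_{H→H} ≤ ‖T‖_{Y→Y}^{1/2} · ‖S‖_{Y→Y}^{1/2}. -/
/-!
For `A = S ∘ T`, which is symmetric for the inner product pulled back along `ι`, Cauchy–Schwarz
makes `n ↦ ‖ι (Aⁿ y)‖` log-convex, so `‖ι (A y)‖ / ‖ι y‖` is at most the `n`-th root of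
`‖ι (Aⁿ y)‖ / ‖ι y‖ ≤ ‖ι‖ ‖y‖ ‖A‖ⁿ / ‖ι y‖`, which tends to `‖A‖`. Hence
`‖ι (T y)‖² = ⟪ι y, ι (A y)⟫ ≤ ‖S‖ ‖T‖ ‖ι y‖²`, so `T` is bounded for the norm of `H` on the
dense range of `ι` and extends to `H`.
-/

open scoped InnerProductSpace

def IsLogConvexSeq {R : Type*} [Monoid R] [LE R] (a : ℕ → R) : Prop :=
  ∀ n, a (n + 1) ^ 2 ≤ a n * a (n + 2)

theorem le_of_forall_pow_le_mul_pow {K : Type*} [Field K] [LinearOrder K] [IsStrictOrderedRing K]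
    [Archimedean K] {a b C : K} (hb : 0 ≤ b) (h : ∀ n : ℕ, a ^ n ≤ C * b ^ n) : a ≤ b := by
  by_contra! hba
  rcases hb.eq_or_lt with rfl | hb
  · exact hba.not_ge (by simpa using h 1)
  obtain ⟨n, hn⟩ := pow_unbounded_of_one_lt C ((one_lt_div hb).mpr hba)
  rw [div_pow, lt_div_iff₀ (pow_pos hb n)] at hn
  exact hn.not_ge (h n)

namespace IsLogConvexSeq

section OrderedRing

variable {R : Type*} [CommRing R] [LinearOrder R] [IsStrictOrderedRing R] {a : ℕ → R}

theorem mul_le_mul_succ (ha : ∀ n, 0 ≤ a n) (hconv : IsLogConvexSeq a) (n : ℕ) :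
    a 1 * a n ≤ a 0 * a (n + 1) := by
  induction n with
  | zero => rw [mul_comm]
  | succ n ih =>
    rcases (ha n).eq_or_lt with hn | hn
    · have : a (n + 1) = 0 := (sq_nonpos_iff _).mp (by simpa [← hn] using hconv n)
      rw [this, mul_zero]
      exact mul_nonneg (ha 0) (ha _)
    · refine le_of_mul_le_mul_left ?_ hn
      calc a n * (a 1 * a (n + 1)) = a 1 * a n * a (n + 1) := by ring
        _ ≤ a 0 * a (n + 1) * a (n + 1) := mul_le_mul_of_nonneg_right ih (ha _)
        _ = a 0 * a (n + 1) ^ 2 := by ring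
        _ ≤ a 0 * (a n * a (n + 2)) := mul_le_mul_of_nonneg_left (hconv n) (ha 0)
        _ = a n * (a 0 * a (n + 1 + 1)) := by ring

theorem pow_mul_le_pow_mul (ha : ∀ n, 0 ≤ a n) (hconv : IsLogConvexSeq a) (n : ℕ) :
    a 1 ^ n * a 0 ≤ a 0 ^ n * a n := by
  induction n with
  | zero => simp
  | succ n ih =>
    calc a 1 ^ (n + 1) * a 0 = a 1 * (a 1 ^ n * a 0) := by ring
      _ ≤ a 1 * (a 0 ^ n * a n) := mul_le_mul_of_nonneg_left ih (ha 1)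
      _ = a 0 ^ n * (a 1 * a n) := by ring
      _ ≤ a 0 ^ n * (a 0 * a (n + 1)) :=
        mul_le_mul_of_nonneg_left (hconv.mul_le_mul_succ ha n) (pow_nonneg (ha 0) n)
      _ = a 0 ^ (n + 1) * a (n + 1) := by ring

end OrderedRing

theorem le_mul_of_le_mul_pow {K : Type*} [Field K] [LinearOrder K] [IsStrictOrderedRing K]
    [Archimedean K] {a : ℕ → K} {C r : K} (ha : ∀ n, 0 ≤ a n) (hconv : IsLogConvexSeq a)
    (hr : 0 ≤ r) (hgrowth : ∀ n, a n ≤ C * r ^ n) : a 1 ≤ r * a 0 := by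
  rcases (ha 0).eq_or_lt with h0 | h0
  · have := hconv 0
    rw [← h0, zero_mul] at this
    rw [← h0, mul_zero]
    exact ((sq_nonpos_iff _).mp this).le
  refine le_of_forall_pow_le_mul_pow (C := C / a 0) (mul_nonneg hr h0.le) fun n => ?_
  rw [div_mul_eq_mul_div, le_div_iff₀ h0]
  calc a 1 ^ n * a 0 ≤ a 0 ^ n * a n := hconv.pow_mul_le_pow_mul ha n
    _ ≤ a 0 ^ n * (C * r ^ n) := mul_le_mul_of_nonneg_left (hgrowth n) (pow_nonneg h0.le n)
    _ = C * (r * a 0) ^ n := by ring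

end IsLogConvexSeq

section FormalAdjoint

variable (𝕜 : Type*) {Y H : Type*} [RCLike 𝕜] [SeminormedAddCommGroup H] [InnerProductSpace 𝕜 H]

def IsFormalAdjoint (ι : Y → H) (T S : Y → Y) : Prop :=
  ∀ y₁ y₂, ⟪ι (T y₁), ι y₂⟫_𝕜 = ⟪ι y₁, ι (S y₂)⟫_𝕜

variable {𝕜}

namespace IsFormalAdjoint

section Maps

variable {ι : Y → H} {T S T' S' : Y → Y}

theorem symm (h : IsFormalAdjoint 𝕜 ι T S) : IsFormalAdjoint 𝕜 ι S T := by
  intro y₁ y₂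
  rw [← inner_conj_symm, ← h, inner_conj_symm]

theorem comp (h : IsFormalAdjoint 𝕜 ι T S) (h' : IsFormalAdjoint 𝕜 ι T' S') :
    IsFormalAdjoint 𝕜 ι (T' ∘ T) (S ∘ S') := by
  intro y₁ y₂
  rw [Function.comp_apply, h', h, Function.comp_apply]

theorem sq_norm_apply_le (h : IsFormalAdjoint 𝕜 ι T S) (y : Y) :
    ‖ι (T y)‖ ^ 2 ≤ ‖ι y‖ * ‖ι (S (T y))‖ := by
  rw [@norm_sq_eq_re_inner 𝕜, h]
  exact re_inner_le_norm _ _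

end Maps

variable [SeminormedAddCommGroup Y] [NormedSpace 𝕜 Y] {ι : Y →L[𝕜] H}

theorem norm_apply_le_opNorm_mul {A : Y →L[𝕜] Y} (hA : IsFormalAdjoint 𝕜 ι A A) (y : Y) :
    ‖ι (A y)‖ ≤ ‖A‖ * ‖ι y‖ := by
  have hconv : IsLogConvexSeq fun n => ‖ι (A^[n] y)‖ := fun n => by
    simpa only [Function.iterate_succ_apply'] using hA.sq_norm_apply_le (A^[n] y)
  have hgrowth (n : ℕ) : ‖ι (A^[n] y)‖ ≤ ‖ι‖ * ‖y‖ * ‖A‖ ^ n :=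
    calc ‖ι (A^[n] y)‖ ≤ ‖ι‖ * ‖A^[n] y‖ := ι.le_opNorm _
      _ ≤ ‖ι‖ * (‖A‖ ^ n * ‖y‖) := by
        gcongr
        simpa using (A.lipschitz.iterate n).norm_le_mul (Function.iterate_fixed (map_zero A) n) y
      _ = ‖ι‖ * ‖y‖ * ‖A‖ ^ n := by ring
  simpa using hconv.le_mul_of_le_mul_pow (fun n => norm_nonneg _) (norm_nonneg A) hgrowth

theorem norm_apply_le_sqrt_mul_sqrt {T S : Y →L[𝕜] Y} (h : IsFormalAdjoint 𝕜 ι T S) (y : Y) :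
    ‖ι (T y)‖ ≤ √‖T‖ * √‖S‖ * ‖ι y‖ := by
  have hST : IsFormalAdjoint 𝕜 ι (S ∘L T) (S ∘L T) := h.comp h.symm
  refine le_of_pow_le_pow_left₀ two_ne_zero (by positivity) ?_
  calc ‖ι (T y)‖ ^ 2 ≤ ‖ι y‖ * ‖ι (S (T y))‖ := h.sq_norm_apply_le y
    _ ≤ ‖ι y‖ * (‖S ∘L T‖ * ‖ι y‖) := by gcongr; exact hST.norm_apply_le_opNorm_mul y
    _ ≤ ‖ι y‖ * (‖S‖ * ‖T‖ * ‖ι y‖) := by gcongr; exact S.opNorm_comp_le T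
    _ = (√‖T‖ * √‖S‖ * ‖ι y‖) ^ 2 := by
      rw [mul_pow, mul_pow, Real.sq_sqrt (norm_nonneg T), Real.sq_sqrt (norm_nonneg S)]
      ring

end IsFormalAdjoint

end FormalAdjoint

theorem krein_lemma_general {H Y : Type*}
    [NormedAddCommGroup H] [InnerProductSpace ℂ H] [CompleteSpace H]
    [NormedAddCommGroup Y] [NormedSpace ℂ Y]
    (ι : Y →L[ℂ] H) (hdense : DenseRange ι)
    (T S : Y →L[ℂ] Y)
    (h : ∀ y₁ y₂ : Y, ⟪ι (T y₁), ι y₂⟫_ℂ = ⟪ι y₁, ι (S y₂)⟫_ℂ) :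
    ∃ Thatn : H →L[ℂ] H,
      (∀ y : Y, Thatn (ι y) = ι (T y)) ∧
      ‖Thatn‖ ≤ Real.sqrt ‖T‖ * Real.sqrt ‖S‖ := by
  have hbound := IsFormalAdjoint.norm_apply_le_sqrt_mul_sqrt (ι := ι) h
  refine ⟨(ι.toLinearMap ∘ₗ T.toLinearMap).extendOfNorm ι.toLinearMap, fun y => ?_, ?_⟩
  · exact LinearMap.extendOfNorm_eq hdense ⟨_, hbound⟩ y
  · exact LinearMap.opNorm_extendOfNorm_le hdense (by positivity) hbound

/-- Krein's lemma (Theorem 9.10): let `H` be a complex Hilbert space and `Y` a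
normed space continuously and densely embedded into `H` via `ι`. If
`T, S : Y → Y` are bounded operators with `(T y₁, y₂)_H = (y₁, S y₂)_H` for all
`y₁, y₂ ∈ Y`, then `T` extends to a bounded operator `T̂` on `H` with
`‖T̂‖ ≤ ‖T‖^{1/2} ‖S‖^{1/2}`. -/
theorem krein_lemma {H Y : Type*}
    [NormedAddCommGroup H] [InnerProductSpace ℂ H] [CompleteSpace H]
    [NormedAddCommGroup Y] [NormedSpace ℂ Y]
    (ι : Y →L[ℂ] H) (hinj : Function.Injective ι) (hdense : DenseRange ι)
    (T S : Y →L[ℂ] Y)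
    (h : ∀ y₁ y₂ : Y, ⟪ι (T y₁), ι y₂⟫_ℂ = ⟪ι y₁, ι (S y₂)⟫_ℂ) :
    ∃ Thatn : H →L[ℂ] H,
      (∀ y : Y, Thatn (ι y) = ι (T y)) ∧
      ‖Thatn‖ ≤ Real.sqrt ‖T‖ * Real.sqrt ‖S‖ :=
  krein_lemma_general ι hdense T S h
end
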